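/- Let p be a prime and let m_0, ..., m_i be natural numbers with n = m_0 + ... + m_i. Then the multinomial coefficient n!/(m_0!···m_i!) satisfies the congruence n!/(m_0!···m_i!) ≡ ∏_{l ≥ 0} C(n_l; m_{0,l}, ..., m_{i,l}) (mod p), where n_l and m_{j,l} denote the l-th base-p digits of n and m_j respectively, and where C(a; b_0, ..., b_i) denotes the coefficient of X_0^{b_0}···X_i^{b_i} in (X_0 + ... + X_i)^a, i.e. C(a; b_0, ..., b_i) equals a!/(b_0!···b_i!) if b_0 + ... + b_i = a and equals 0 otherwise. (The product over l is finite since all factors are 1 for l large.) -/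

import Mathlib

/-- The `l`-th digit of `n` in base `p`. -/
def digit (p l n : ℕ) : ℕ := n / p ^ l % p

/-- `C(a; b_0, ..., b_{k-1})`: the coefficient of `X_0^{b_0} ⋯ X_{k-1}^{b_{k-1}}` in
`(X_0 + ⋯ + X_{k-1})^a`, i.e. `a!/(b_0!⋯b_{k-1}!)` if `b_0 + ⋯ + b_{k-1} = a`,
and `0` otherwise. -/
def genMultinomial {k : ℕ} (a : ℕ) (b : Fin k → ℕ) : ℕ :=
  if (∑ j, b j) = a then Nat.multinomial Finset.univ b else 0

/-!
Work with `genMultinomial`, which vanishes off `∑ b = a` and so makes sense for every `n`.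
Peeling off one part, `C(n; m) = n.choose m₀ * C(n - m₀; m₁, …)`, so Lucas' theorem for
binomial coefficients and induction on the number of parts give
`C(n; m) ≡ C(n % p; m % p) * C(n / p; m / p) (mod p)`: either `m₀` subtracts from `n` without
a borrow between the last digit and the higher part, or the Lucas factor
`(n % p).choose (m₀ % p) * (n / p).choose (m₀ / p)` already vanishes. Iterating over the
base-`p` digits leaves `C(n / p ^ L; m / p ^ L) = C(0; 0) = 1`.
-/

open Finset

lemma Nat.multinomial_univ_fin_succ {k : ℕ} (m : Fin (k + 1) → ℕ) :
    Nat.multinomial univ m = (∑ j, m j).choose (m 0) * Nat.multinomial univ (Fin.tail m) := by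
  rw [Fin.univ_succ, Nat.multinomial_cons, Finset.sum_cons, Finset.sum_map]
  unfold Nat.multinomial
  rw [Finset.sum_map, Finset.prod_map]
  rfl

lemma genMultinomial_fin_zero (a : ℕ) (b : Fin 0 → ℕ) :
    genMultinomial a b = if a = 0 then 1 else 0 := by
  simp [genMultinomial, eq_comm]

lemma genMultinomial_fin_succ {k : ℕ} (a : ℕ) (b : Fin (k + 1) → ℕ) :
    genMultinomial a b = a.choose (b 0) * genMultinomial (a - b 0) (Fin.tail b) := by
  unfold genMultinomial Fin.tail
  rw [Fin.sum_univ_succ]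
  by_cases h0 : b 0 ≤ a
  · by_cases h : b 0 + ∑ j : Fin k, b j.succ = a
    · rw [if_pos h, if_pos (by omega), Nat.multinomial_univ_fin_succ, Fin.sum_univ_succ, h]
      rfl
    · rw [if_neg h, if_neg (by omega), mul_zero]
  · rw [if_neg (by omega), Nat.choose_eq_zero_of_lt (by omega), zero_mul]

lemma genMultinomial_zero_zero {k : ℕ} : genMultinomial 0 (fun _ : Fin k => 0) = 1 := by
  simp [genMultinomial, Nat.multinomial]

lemma Nat.choose_mod_mul_choose_div_eq_zero_or {p : ℕ} (hp : 0 < p) (n a : ℕ) :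
    (n % p).choose (a % p) * (n / p).choose (a / p) = 0 ∨
      (n - a) % p = n % p - a % p ∧ (n - a) / p = n / p - a / p := by
  by_cases hr : a % p ≤ n % p
  · by_cases hq : a / p ≤ n / p
    · right
      have hsub : n - a = (n % p - a % p) + p * (n / p - a / p) := by
        have := Nat.div_add_mod n p
        have := Nat.div_add_mod a p
        have : p * (n / p - a / p) = p * (n / p) - p * (a / p) := Nat.mul_sub _ _ _
        have : p * (a / p) ≤ p * (n / p) := Nat.mul_le_mul_left _ hq
        omega
      have hlt : n % p - a % p < p := by have := Nat.mod_lt n hp; omega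
      rw [hsub, Nat.add_mul_mod_self_left, Nat.mod_eq_of_lt hlt, Nat.add_mul_div_left _ _ hp,
        Nat.div_eq_of_lt hlt, zero_add]
      exact ⟨rfl, rfl⟩
    · exact .inl (mul_eq_zero_of_right _ (Nat.choose_eq_zero_of_lt (by omega)))
  · exact .inl (mul_eq_zero_of_left (Nat.choose_eq_zero_of_lt (by omega)) _)

theorem genMultinomial_modEq_mod_mul_div {p : ℕ} (hp : p.Prime) {k : ℕ} (n : ℕ)
    (m : Fin k → ℕ) :
    genMultinomial n m ≡
      genMultinomial (n % p) (fun j => m j % p) * genMultinomial (n / p) (fun j => m j / p)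
        [MOD p] := by
  have := Fact.mk hp
  induction k generalizing n with
  | zero =>
    have hzero : n = 0 ↔ n % p = 0 ∧ n / p = 0 :=
      ⟨fun h => by simp [h], fun ⟨h1, h2⟩ => by rw [← Nat.div_add_mod n p, h1, h2]; simp⟩
    simp only [genMultinomial_fin_zero, hzero]
    split_ifs <;> simp_all [Nat.ModEq]
  | succ k ih =>
    calc genMultinomial n m
        = n.choose (m 0) * genMultinomial (n - m 0) (Fin.tail m) := genMultinomial_fin_succ n m
      _ ≡ ((n % p).choose (m 0 % p) * (n / p).choose (m 0 / p)) *
          (genMultinomial ((n - m 0) % p) (fun j => Fin.tail m j % p) *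
            genMultinomial ((n - m 0) / p) (fun j => Fin.tail m j / p)) [MOD p] :=
        Choose.choose_modEq_choose_mod_mul_choose_div_nat.mul (ih (n - m 0) (Fin.tail m))
      _ = genMultinomial (n % p) (fun j => m j % p) *
          genMultinomial (n / p) (fun j => m j / p) := by
        rw [genMultinomial_fin_succ (n % p), genMultinomial_fin_succ (n / p)]
        rcases Nat.choose_mod_mul_choose_div_eq_zero_or hp.pos n (m 0) with h | ⟨hmod, hdiv⟩
        · rw [h, zero_mul, mul_mul_mul_comm, h, zero_mul]
        · rw [hmod, hdiv, mul_mul_mul_comm]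
          rfl

lemma digit_zero (p n : ℕ) : digit p 0 n = n % p := by
  rw [digit, pow_zero, Nat.div_one]

lemma digit_succ (p l n : ℕ) : digit p (l + 1) n = digit p l (n / p) := by
  rw [digit, digit, Nat.div_div_eq_div_mul, pow_succ']

theorem genMultinomial_modEq_prod_digit_mul {p : ℕ} (hp : p.Prime) {k : ℕ} (L n : ℕ)
    (m : Fin k → ℕ) :
    genMultinomial n m ≡
      (∏ l ∈ range L, genMultinomial (digit p l n) (fun j => digit p l (m j))) *
        genMultinomial (n / p ^ L) (fun j => m j / p ^ L) [MOD p] := by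
  induction L generalizing n m with
  | zero => simp [Nat.ModEq]
  | succ L ih =>
    refine (genMultinomial_modEq_mod_mul_div hp n m).trans ?_
    refine ((ih (n / p) fun j => m j / p).mul_left _).trans ?_
    simp only [prod_range_succ', digit_succ, digit_zero, Nat.div_div_eq_div_mul, ← pow_succ']
    convert Nat.ModEq.refl _ using 1
    ring

/-- Lucas' theorem for multinomial coefficients: if `n = m_0 + ⋯ + m_i`, then
`n!/(m_0! ⋯ m_i!) ≡ ∏_l C(digit_l n; digit_l m_0, ..., digit_l m_i) (mod p)`,
where the product runs over all base-`p` digit positions of `n` (all further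
factors being `1`). -/
theorem lucas_multinomial (p : ℕ) (hp : p.Prime) (i : ℕ) (m : Fin (i + 1) → ℕ)
    (n : ℕ) (hn : n = ∑ j, m j) (L : ℕ) (hL : n < p ^ L) :
    Nat.multinomial Finset.univ m ≡
      ∏ l ∈ Finset.range L, genMultinomial (digit p l n) (fun j => digit p l (m j))
        [MOD p] := by
  have hm : ∀ j, m j / p ^ L = 0 := fun j =>
    Nat.div_eq_of_lt ((hn ▸ single_le_sum (fun _ _ => Nat.zero_le _) (mem_univ j)).trans_lt hL)
  have h := genMultinomial_modEq_prod_digit_mul hp L n m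
  rwa [genMultinomial, if_pos hn.symm, Nat.div_eq_of_lt hL, funext hm, genMultinomial_zero_zero,
    mul_one] at h
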